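/- Let n ≥ 1 and k ≥ 1 be integers, let H = {x ∈ ℝⁿ : xₙ ≥ 0} be the closed upper half-space, and let f : ℝⁿ → ℝ be of class C^k. Assume: (i) sup_{x ∈ H} ‖iteratedFDeriv ℝ k f x‖ ≤ A; (ii) for every multi-index γ with |γ| ≤ k−1 and every x with xₙ = 0 one has |∂^γ f(x)| ≤ ε. Then for every multi-index γ with |γ| ≤ k−1 and every x ∈ H, |∂^γ f(x)| ≤ ε · Σ_{i=0}^{k−1−|γ|} xₙ^i / i! + A · xₙ^{k−|γ|} / (k−|γ|)!. -/

import Mathlib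

/-!
Induction on `k - |γ|`. On the vertical segment `t ↦ (x', t)` the derivative of `∂^γ f` is
`∂^(γ + eₙ) f`: differentiation adds a direction in the outermost slot, and symmetry of the
iterated derivative of a `C^k` function moves it to the innermost one, where `∂^(γ + eₙ)` has it.
The bound `ε * ∑_{i<d+1} t^i/i! + A * t^(d+1)/(d+1)!` equals `ε` at `t = 0` and has as derivative
the same bound with `d` in place of `d + 1`, so the comparison theorem for derivatives carries the
estimate from order `|γ| + 1` down to order `|γ|`. At order `k` it is the bound `A` itself.
-/

/-- The multi-index partial derivative `∂^γ f (x)` of `f : ℝⁿ → ℝ`, defined by applying the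
iterated Fréchet derivative of order `|γ| = ∑ i, γ i` to the list of coordinate directions in
which each direction `i` is repeated `γ i` times. -/
noncomputable def mpderiv {n : ℕ} (γ : Fin n → ℕ) (f : (Fin n → ℝ) → ℝ)
    (x : Fin n → ℝ) : ℝ :=
  iteratedFDeriv ℝ ((List.finRange n).flatMap (fun i => List.replicate (γ i) i)).length f x
    (fun j => Pi.single (((List.finRange n).flatMap (fun i => List.replicate (γ i) i)).get j) 1)

open Finset

section IteratedFDeriv

variable {E F : Type*} [NormedAddCommGroup E] [NormedSpace ℝ E]
  [NormedAddCommGroup F] [NormedSpace ℝ F]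

theorem iteratedFDeriv_succ_apply_snoc {m : ℕ} {f : E → F} (hf : ContDiff ℝ (m + 1) f)
    (x : E) (v : Fin m → E) (u : E) :
    iteratedFDeriv ℝ (m + 1) f x (Fin.snoc v u) =
      iteratedFDeriv ℝ m (fun y => fderiv ℝ f y u) x v := by
  have hcomp := (ContinuousLinearMap.apply ℝ F u).iteratedFDeriv_comp_left
    ((hf.fderiv_right le_rfl).contDiffAt (x := x)) le_rfl
  rw [iteratedFDeriv_succ_apply_right, Fin.init_snoc, Fin.snoc_last]
  exact (congrArg (fun L => L v) hcomp).symm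

theorem fderiv_fderiv_apply_comm {f : E → F} (hf : ContDiff ℝ 2 f) (x u v : E) :
    fderiv ℝ (fun y => fderiv ℝ f y v) x u = fderiv ℝ (fun y => fderiv ℝ f y u) x v := by
  have hdf : DifferentiableAt ℝ (fderiv ℝ f) x :=
    (hf.fderiv_right (m := 1) (by norm_num)).differentiable (by norm_num) x
  rw [fderiv_clm_apply hdf (differentiableAt_const _),
    fderiv_clm_apply hdf (differentiableAt_const _)]
  simpa using (hf.contDiffAt (x := x)).isSymmSndFDerivAt (by simp) u v

theorem iteratedFDeriv_cons_eq_snoc {m : ℕ} {f : E → F} (hf : ContDiff ℝ (m + 1) f)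
    (x : E) (v : Fin m → E) (u : E) :
    iteratedFDeriv ℝ (m + 1) f x (Fin.cons u v) = iteratedFDeriv ℝ (m + 1) f x (Fin.snoc v u) := by
  induction m generalizing f with
  | zero => congr 1; ext i; fin_cases i; rfl
  | succ m ih =>
    have hderiv (w : E) : ContDiff ℝ (m + 1) (fun y => fderiv ℝ f y w) :=
      (ContinuousLinearMap.apply ℝ F w).contDiff.comp (hf.fderiv_right le_rfl)
    have hcomm : (fun y => fderiv ℝ (fun z => fderiv ℝ f z (v (Fin.last m))) y u) =
        fun y => fderiv ℝ (fun z => fderiv ℝ f z u) y (v (Fin.last m)) :=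
      funext fun y => fderiv_fderiv_apply_comm (hf.of_le (by norm_cast; omega)) y _ _
    calc iteratedFDeriv ℝ (m + 2) f x (Fin.cons u v)
        = iteratedFDeriv ℝ (m + 2) f x (Fin.snoc (Fin.cons u (Fin.init v)) (v (Fin.last m))) := by
          rw [← Fin.cons_snoc_eq_snoc_cons, Fin.snoc_init_self]
      _ = iteratedFDeriv ℝ m (fun y => fderiv ℝ (fun z => fderiv ℝ f z (v (Fin.last m))) y u)
            x (Fin.init v) := by
          rw [iteratedFDeriv_succ_apply_snoc hf, ih (hderiv _),
            iteratedFDeriv_succ_apply_snoc (hderiv _)]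
      _ = iteratedFDeriv ℝ (m + 2) f x (Fin.snoc v u) := by
          rw [hcomm, iteratedFDeriv_succ_apply_snoc hf, ← Fin.snoc_init_self v,
            iteratedFDeriv_succ_apply_snoc (hderiv _), Fin.init_snoc, Fin.snoc_last]

theorem hasDerivAt_iteratedFDeriv_apply_comp {m : ℕ} {f : E → F} (hf : ContDiff ℝ (m + 1) f)
    (v : Fin m → E) {c : ℝ → E} {w : E} {t : ℝ} (hc : HasDerivAt c w t) :
    HasDerivAt (fun s => iteratedFDeriv ℝ m f (c s) v)
      (iteratedFDeriv ℝ (m + 1) f (c t) (Fin.snoc v w)) t := by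
  have hD := (hf.differentiable_iteratedFDeriv (by exact_mod_cast lt_add_one m) (c t)).hasFDerivAt
  have := ((ContinuousMultilinearMap.apply ℝ (fun _ : Fin m => E) F v).hasFDerivAt.comp _
    hD).comp_hasDerivAt t hc
  rwa [← iteratedFDeriv_cons_eq_snoc hf, iteratedFDeriv_succ_apply_left, Fin.cons_zero,
    Fin.tail_cons]

theorem iteratedFDeriv_apply_get_append_singleton {ι : Type*} {f : E → F} (x : E) (w : ι → E)
    (l : List ι) (i : ι) :
    iteratedFDeriv ℝ (l ++ [i]).length f x (fun j => w ((l ++ [i]).get j)) =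
      iteratedFDeriv ℝ (l.length + 1) f x (Fin.snoc (fun j => w (l.get j)) (w i)) := by
  -- `(l ++ [i]).length = l.length + 1` holds only propositionally, hence the detour through `N`.
  have key : ∀ N (h : N = l.length + 1) (v : Fin N → E),
      v = Fin.snoc (fun j => w (l.get j)) (w i) ∘ Fin.cast h →
      iteratedFDeriv ℝ N f x v =
        iteratedFDeriv ℝ (l.length + 1) f x (Fin.snoc (fun j => w (l.get j)) (w i)) := by
    rintro N rfl v rfl
    rfl
  refine key _ (by simp) _ (funext fun j => ?_)
  obtain ⟨j, hj⟩ := j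
  simp only [Function.comp_apply, Fin.snoc, List.get_eq_getElem, Fin.val_cast, Fin.val_castLT,
    cast_eq]
  split_ifs with hjl
  · rw [List.getElem_append_left hjl]
  · obtain rfl : j = l.length := by simp at hj; omega
    simp

end IteratedFDeriv

open Nat in
noncomputable def taylorBound (ε A : ℝ) (d : ℕ) (t : ℝ) : ℝ :=
  ε * ∑ i ∈ range d, t ^ i / i ! + A * t ^ d / d !

theorem hasDerivAt_pow_succ_div_factorial (i : ℕ) (t : ℝ) :
    HasDerivAt (fun s : ℝ => s ^ (i + 1) / (i + 1).factorial) (t ^ i / i.factorial) t := by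
  refine ((hasDerivAt_pow (i + 1) t).div_const _).congr_deriv ?_
  rw [Nat.factorial_succ]
  push_cast
  field_simp

theorem hasDerivAt_taylorBound (ε A : ℝ) (d : ℕ) (t : ℝ) :
    HasDerivAt (taylorBound ε A (d + 1)) (taylorBound ε A d t) t := by
  have hsum : HasDerivAt (fun s : ℝ => ∑ i ∈ range (d + 1), s ^ i / i.factorial)
      (∑ i ∈ range d, t ^ i / i.factorial) t := by
    simp only [sum_range_succ' (fun i => _ ^ i / (i.factorial : ℝ))]
    simpa using (HasDerivAt.sum fun i _ => hasDerivAt_pow_succ_div_factorial i t).add_const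
      ((0 : ℝ) ^ 0 / (0 : ℕ).factorial)
  refine (((hsum.const_mul ε).add ((hasDerivAt_pow_succ_div_factorial d t).const_mul A)).congr_deriv
    ?_).congr_of_eventuallyEq (.of_forall fun s => ?_) <;>
  · simp only [taylorBound, Pi.add_apply]
    ring

theorem taylorBound_succ_zero (ε A : ℝ) (d : ℕ) : taylorBound ε A (d + 1) 0 = ε := by
  simp [taylorBound, sum_range_succ']

theorem abs_le_taylorBound_of_hasDerivAt {φ ψ : ℝ → ℝ} {ε A s : ℝ} {d : ℕ}
    (hφ : ∀ t, HasDerivAt φ (ψ t) t) (h0 : |φ 0| ≤ ε)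
    (hψ : ∀ t ∈ Set.Ico 0 s, |ψ t| ≤ taylorBound ε A d t) (hs : 0 ≤ s) :
    |φ s| ≤ taylorBound ε A (d + 1) s :=
  image_norm_le_of_norm_deriv_right_le_deriv_boundary
    (fun t _ => (hφ t).continuousAt.continuousWithinAt) (fun t _ => (hφ t).hasDerivWithinAt)
    (by simpa [taylorBound_succ_zero] using h0) (hasDerivAt_taylorBound ε A d) hψ
    ⟨hs, le_rfl⟩

section MultiIndex

variable {n : ℕ}

def multiIndexList (γ : Fin n → ℕ) : List (Fin n) :=
  (List.finRange n).flatMap fun i => List.replicate (γ i) i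

theorem length_multiIndexList (γ : Fin n → ℕ) : (multiIndexList γ).length = ∑ i, γ i := by
  simp [multiIndexList, List.length_flatMap, Fin.sum_univ_def]

theorem multiIndexList_add_single_last (γ : Fin (n + 1) → ℕ) :
    multiIndexList (γ + Pi.single (Fin.last n) 1) = multiIndexList γ ++ [Fin.last n] := by
  simp [multiIndexList, List.finRange_succ_last, List.flatMap_append, List.flatMap_map,
    Fin.castSucc_ne_last, List.replicate_succ']

theorem mpderiv_add_single_last (γ : Fin (n + 1) → ℕ) (f : (Fin (n + 1) → ℝ) → ℝ)
    (x : Fin (n + 1) → ℝ) :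
    mpderiv (γ + Pi.single (Fin.last n) 1) f x =
      iteratedFDeriv ℝ ((multiIndexList γ).length + 1) f x
        (Fin.snoc (fun j => Pi.single ((multiIndexList γ).get j) 1)
          (Pi.single (Fin.last n) 1)) := by
  change iteratedFDeriv ℝ (multiIndexList _).length f x
    (fun j => Pi.single ((multiIndexList _).get j) 1) = _
  rw [multiIndexList_add_single_last]
  exact iteratedFDeriv_apply_get_append_singleton x (fun i => Pi.single i 1) _ _

theorem hasDerivAt_mpderiv_update_last {γ : Fin (n + 1) → ℕ} {f : (Fin (n + 1) → ℝ) → ℝ}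
    (hf : ContDiff ℝ (∑ i, γ i + 1) f) (x : Fin (n + 1) → ℝ) (t : ℝ) :
    HasDerivAt (fun s => mpderiv γ f (Function.update x (Fin.last n) s))
      (mpderiv (γ + Pi.single (Fin.last n) 1) f (Function.update x (Fin.last n) t)) t := by
  have hf' : ContDiff ℝ ((multiIndexList γ).length + 1) f := by rwa [length_multiIndexList]
  rw [mpderiv_add_single_last]
  exact hasDerivAt_iteratedFDeriv_apply_comp hf' _ (hasDerivAt_update x _ t)

theorem abs_mpderiv_le_norm_iteratedFDeriv (γ : Fin n → ℕ) (f : (Fin n → ℝ) → ℝ)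
    (x : Fin n → ℝ) : |mpderiv γ f x| ≤ ‖iteratedFDeriv ℝ (∑ i, γ i) f x‖ := by
  rw [← length_multiIndexList, ← Real.norm_eq_abs]
  have h := (iteratedFDeriv ℝ (multiIndexList γ).length f x).le_opNorm_mul_prod_of_le
    (m := fun j => Pi.single ((multiIndexList γ).get j) 1) (b := fun _ => 1)
    fun _ => by rw [Pi.norm_single, norm_one]
  rwa [prod_const_one, mul_one] at h

theorem abs_mpderiv_le_taylorBound_succ {γ : Fin (n + 1) → ℕ} {f : (Fin (n + 1) → ℝ) → ℝ}
    {ε A : ℝ} {d : ℕ} (hf : ContDiff ℝ (∑ i, γ i + 1) f)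
    (hboundary : ∀ y : Fin (n + 1) → ℝ, y (Fin.last n) = 0 → |mpderiv γ f y| ≤ ε)
    (hnext : ∀ y : Fin (n + 1) → ℝ, 0 ≤ y (Fin.last n) →
      |mpderiv (γ + Pi.single (Fin.last n) 1) f y| ≤ taylorBound ε A d (y (Fin.last n)))
    {x : Fin (n + 1) → ℝ} (hx : 0 ≤ x (Fin.last n)) :
    |mpderiv γ f x| ≤ taylorBound ε A (d + 1) (x (Fin.last n)) := by
  have h := abs_le_taylorBound_of_hasDerivAt (hasDerivAt_mpderiv_update_last hf x)
    (hboundary _ (Function.update_self ..))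
    (fun t ht => by simpa using hnext (Function.update x (Fin.last n) t) (by simpa using ht.1)) hx
  simpa only [Function.update_eq_self] using h

end MultiIndex

theorem taylor_halfspace_estimate_general (n k : ℕ) (A ε : ℝ)
    (f : (Fin (n + 1) → ℝ) → ℝ) (hf : ContDiff ℝ k f)
    (hA : ∀ x : Fin (n + 1) → ℝ, 0 ≤ x (Fin.last n) → ‖iteratedFDeriv ℝ k f x‖ ≤ A)
    (hε : ∀ γ : Fin (n + 1) → ℕ, (∑ i, γ i) ≤ k - 1 →
      ∀ x : Fin (n + 1) → ℝ, x (Fin.last n) = 0 → |mpderiv γ f x| ≤ ε) :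
    ∀ γ : Fin (n + 1) → ℕ, (∑ i, γ i) ≤ k - 1 →
      ∀ x : Fin (n + 1) → ℝ, 0 ≤ x (Fin.last n) →
        |mpderiv γ f x|
          ≤ ε * (∑ i ∈ Finset.range (k - (∑ j, γ j)), (x (Fin.last n)) ^ i / (i.factorial : ℝ))
            + A * (x (Fin.last n)) ^ (k - ∑ j, γ j) / ((k - ∑ j, γ j).factorial : ℝ) := by
  have key : ∀ d γ, ∑ i, γ i + d = k → ∀ x : Fin (n + 1) → ℝ, 0 ≤ x (Fin.last n) →
      |mpderiv γ f x| ≤ taylorBound ε A d (x (Fin.last n)) := by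
    intro d
    induction d with
    | zero =>
      intro γ hγ x hx
      obtain rfl : ∑ i, γ i = k := hγ
      simpa [taylorBound] using (abs_mpderiv_le_norm_iteratedFDeriv γ f x).trans (hA x hx)
    | succ d ih =>
      intro γ hγ x hx
      have hsum : ∑ i, (γ + Pi.single (Fin.last n) 1 : Fin (n + 1) → ℕ) i = ∑ i, γ i + 1 := by
        simp [sum_add_distrib]
      exact abs_mpderiv_le_taylorBound_succ (hf.of_le (by exact_mod_cast (by omega : _ ≤ k)))
        (hε γ (by omega)) (ih _ (by omega)) hx
  intro γ hγ x hx
  exact key _ γ (by omega) x hx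

/-- **Taylor-expansion estimate on a half-space** (dimension `n + 1 ≥ 1`, with `xₙ` the last
coordinate): if `f` is `C^k`, the `k`-th derivative of `f` is bounded by `A` on the closed upper
half-space `H = {xₙ ≥ 0}`, and all partial derivatives of order `≤ k - 1` of `f` are bounded by
`ε` on the boundary `{xₙ = 0}`, then for every multi-index `γ` with `|γ| ≤ k - 1` and every
`x ∈ H`,
`|∂^γ f (x)| ≤ ε * ∑_{i=0}^{k-1-|γ|} xₙ^i / i! + A * xₙ^{k-|γ|} / (k-|γ|)!`. -/
theorem taylor_halfspace_estimate (n k : ℕ) (hk : 1 ≤ k) (A ε : ℝ)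
    (f : (Fin (n + 1) → ℝ) → ℝ) (hf : ContDiff ℝ k f)
    (hA : ∀ x : Fin (n + 1) → ℝ, 0 ≤ x (Fin.last n) → ‖iteratedFDeriv ℝ k f x‖ ≤ A)
    (hε : ∀ γ : Fin (n + 1) → ℕ, (∑ i, γ i) ≤ k - 1 →
      ∀ x : Fin (n + 1) → ℝ, x (Fin.last n) = 0 → |mpderiv γ f x| ≤ ε) :
    ∀ γ : Fin (n + 1) → ℕ, (∑ i, γ i) ≤ k - 1 →
      ∀ x : Fin (n + 1) → ℝ, 0 ≤ x (Fin.last n) →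
        |mpderiv γ f x|
          ≤ ε * (∑ i ∈ Finset.range (k - (∑ j, γ j)), (x (Fin.last n)) ^ i / (i.factorial : ℝ))
            + A * (x (Fin.last n)) ^ (k - ∑ j, γ j) / ((k - ∑ j, γ j).factorial : ℝ) :=
  taylor_halfspace_estimate_general n k A ε f hf hA hε
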